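/- Let H' be a (1+ε, β', t)-bounded-distance hopset for G: for every pair u,v with d_G(u,v) ≤ t, d_G(u,v) ≤ d_{G∪H'}^{(β')}(u,v) ≤ (1+ε)·d_G(u,v), and all hopset edges have weight at least the corresponding graph distance. Let A^{(1)} be the S×V adjacency rows of G∪H' and A^{(s+1)} a (1+1/R)-approximation of A^{(s)} ⋆ B where B is the adjacency matrix of G∪H'. Then for every i ∈ S, j ∈ V with d_G(i,j) ≤ t, A^{(β')}_{ij} is a (1+ε)(1+1/R)^{β'-1}-approximation of d_G(i,j). -/

import Mathlib

open scoped ENNReal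

/-- `hopDist w t u v` is the minimum weight of a directed `u → v` walk with at
most `t` edges, where `w` is the (extended-real-valued) adjacency matrix. -/
noncomputable def hopDist {V : Type*} [Fintype V] [DecidableEq V]
    (w : V → V → ℝ≥0∞) : ℕ → V → V → ℝ≥0∞
  | 0 => fun u v => if u = v then 0 else ⊤
  | t + 1 => fun u v => min (hopDist w t u v) (⨅ k, hopDist w t u k + w k v)

/-- The (unbounded) graph distance induced by adjacency matrix `w`. -/
noncomputable def gDist {V : Type*} [Fintype V] [DecidableEq V]
    (w : V → V → ℝ≥0∞) (u v : V) : ℝ≥0∞ :=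
  ⨅ t : ℕ, hopDist w t u v

/-! With a zero diagonal, `hopDist w (s + 1)` is the `s`-fold min-plus power of `w`, so the
rows `A (s + 1)` are sandwiched between the exact `(s + 1)`-hop distances and `(1 + 1/R)^s`
times them: each approximate product loses at most one factor `1 + 1/R`. The hopset property
then compares the `β'`-hop distance in `G ∪ H'` with `d_G` up to the factor `1 + ε`. -/

noncomputable def minPlus {S V : Type*} (M : S → V → ℝ≥0∞) (B : V → V → ℝ≥0∞) :
    S → V → ℝ≥0∞ :=
  fun i j => ⨅ k, M i k + B k j

-- The infimum is attained, so unlike `ENNReal.mul_iInf_of_ne` this needs no finiteness of `c`.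
lemma iInf_le_mul_iInf_of_le {ι : Type*} [Finite ι] [Nonempty ι] {f g : ι → ℝ≥0∞}
    {c : ℝ≥0∞} (h : ∀ i, g i ≤ c * f i) : ⨅ i, g i ≤ c * ⨅ i, f i := by
  obtain ⟨i, hi⟩ := exists_eq_ciInf_of_finite (f := f)
  rw [← hi]
  exact (iInf_le g i).trans (h i)

section HopDist

variable {V : Type*} [Fintype V] [DecidableEq V] {w : V → V → ℝ≥0∞}

lemma minPlus_hopDist_zero (w : V → V → ℝ≥0∞) (u v : V) :
    minPlus (hopDist w 0) w u v = w u v := by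
  refine le_antisymm ((iInf_le _ u).trans (by simp [hopDist])) (le_iInf fun k => ?_)
  by_cases h : u = k
  · subst h; simp [hopDist]
  · simp [hopDist, h]

lemma hopDist_succ_of_diag (hw : ∀ v, w v v = 0) (s : ℕ) (u v : V) :
    hopDist w (s + 1) u v = minPlus (hopDist w s) w u v :=
  min_eq_right ((iInf_le _ v).trans (by simp [hw]))

lemma hopDist_one_of_diag (hw : ∀ v, w v v = 0) (u v : V) : hopDist w 1 u v = w u v := by
  rw [hopDist_succ_of_diag hw, minPlus_hopDist_zero]

variable {S : Type*} (f : S → V) {A : ℕ → S → V → ℝ≥0∞}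

lemma hopDist_le_of_minPlus_le (hw : ∀ v, w v v = 0) (hA1 : ∀ i j, w (f i) j ≤ A 1 i j)
    (hstep : ∀ s, 1 ≤ s → ∀ i j, minPlus (A s) w i j ≤ A (s + 1) i j) (s : ℕ) (i : S) (j : V) :
    hopDist w (s + 1) (f i) j ≤ A (s + 1) i j := by
  induction s generalizing j with
  | zero => rw [hopDist_one_of_diag hw]; exact hA1 i j
  | succ s ih =>
    rw [hopDist_succ_of_diag hw]
    exact (iInf_mono fun k => add_le_add_left (ih k) _).trans (hstep (s + 1) (by omega) i j)

lemma le_pow_mul_hopDist_of_le_mul_minPlus [Nonempty V] (hw : ∀ v, w v v = 0) {c : ℝ≥0∞}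
    (hc : 1 ≤ c) (hA1 : ∀ i j, A 1 i j ≤ w (f i) j)
    (hstep : ∀ s, 1 ≤ s → ∀ i j, A (s + 1) i j ≤ c * minPlus (A s) w i j) (s : ℕ) (i : S)
    (j : V) : A (s + 1) i j ≤ c ^ s * hopDist w (s + 1) (f i) j := by
  induction s generalizing j with
  | zero => rw [hopDist_one_of_diag hw, pow_zero, one_mul]; exact hA1 i j
  | succ s ih =>
    have hprod : minPlus (A (s + 1)) w i j ≤ c ^ s * hopDist w (s + 2) (f i) j := by
      rw [hopDist_succ_of_diag hw]
      refine iInf_le_mul_iInf_of_le fun k => ?_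
      rw [mul_add]
      exact add_le_add (ih k) (le_mul_of_one_le_left' (one_le_pow₀ hc))
    calc A (s + 2) i j ≤ c * minPlus (A (s + 1)) w i j := hstep (s + 1) (by omega) i j
      _ ≤ c * (c ^ s * hopDist w (s + 2) (f i) j) := by gcongr
      _ = c ^ (s + 1) * hopDist w (s + 2) (f i) j := by ring

end HopDist

theorem stmt_13_general {V S : Type*} [Fintype V] [DecidableEq V] [Nonempty V]
    (wG wH : V → V → ℝ≥0∞) (hGdiag : ∀ v, wG v v = 0)
    (ε t : ℝ≥0∞) (β' : ℕ) (hβ' : 1 ≤ β')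
    (hhopset : ∀ u v, gDist wG u v ≤ t →
      gDist wG u v ≤ hopDist (fun a b => min (wG a b) (wH a b)) β' u v ∧
        hopDist (fun a b => min (wG a b) (wH a b)) β' u v ≤ (1 + ε) * gDist wG u v)
    (f : S → V) (R : ℝ≥0∞)
    (A : ℕ → S → V → ℝ≥0∞)
    (hA1 : ∀ i j, A 1 i j = min (wG (f i) j) (wH (f i) j))
    (hAstep : ∀ s, 1 ≤ s → ∀ i j,
      (⨅ k, A s i k + min (wG k j) (wH k j)) ≤ A (s + 1) i j ∧
        A (s + 1) i j ≤ (1 + 1 / R) * ⨅ k, A s i k + min (wG k j) (wH k j)) :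
    ∀ i j, gDist wG (f i) j ≤ t →
      gDist wG (f i) j ≤ A β' i j ∧
        A β' i j ≤ (1 + ε) * (1 + 1 / R) ^ (β' - 1) * gDist wG (f i) j := by
  intro i j hdist
  obtain ⟨s, rfl⟩ : ∃ s, β' = s + 1 := ⟨β' - 1, by omega⟩
  have hw : ∀ v, min (wG v v) (wH v v) = 0 := by simp [hGdiag]
  obtain ⟨hlo, hhi⟩ := hhopset (f i) j hdist
  refine ⟨hlo.trans (hopDist_le_of_minPlus_le f hw (fun i j => (hA1 i j).ge)
    (fun s hs i j => (hAstep s hs i j).1) s i j), ?_⟩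
  calc A (s + 1) i j
      ≤ (1 + 1 / R) ^ s * hopDist (fun a b => min (wG a b) (wH a b)) (s + 1) (f i) j :=
        le_pow_mul_hopDist_of_le_mul_minPlus f hw le_self_add (fun i j => (hA1 i j).le)
          (fun s hs i j => (hAstep s hs i j).2) s i j
    _ ≤ (1 + 1 / R) ^ s * ((1 + ε) * gDist wG (f i) j) := by gcongr
    _ = (1 + ε) * (1 + 1 / R) ^ (s + 1 - 1) * gDist wG (f i) j := by
        rw [Nat.add_sub_cancel]; ring

/-- the bounded-distance hopset analogue of the iterated
approximate distance product: for every source-vertex pair at distance at most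
`t`, after `β' - 1` approximate products the entry is a
`(1+ε)(1+1/R)^(β'-1)`-approximation of the true distance. -/
theorem stmt_13 {V S : Type*} [Fintype V] [DecidableEq V] [Nonempty V]
    (wG wH : V → V → ℝ≥0∞) (hGdiag : ∀ v, wG v v = 0)
    (hHge : ∀ u v, gDist wG u v ≤ wH u v)
    (ε t : ℝ≥0∞) (β' : ℕ) (hβ' : 1 ≤ β')
    (hhopset : ∀ u v, gDist wG u v ≤ t →
      gDist wG u v ≤ hopDist (fun a b => min (wG a b) (wH a b)) β' u v ∧
        hopDist (fun a b => min (wG a b) (wH a b)) β' u v ≤ (1 + ε) * gDist wG u v)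
    (f : S → V) (R : ℝ≥0∞) (hR : 1 ≤ R)
    (A : ℕ → S → V → ℝ≥0∞)
    (hA1 : ∀ i j, A 1 i j = min (wG (f i) j) (wH (f i) j))
    (hAstep : ∀ s, 1 ≤ s → ∀ i j,
      (⨅ k, A s i k + min (wG k j) (wH k j)) ≤ A (s + 1) i j ∧
        A (s + 1) i j ≤ (1 + 1 / R) * ⨅ k, A s i k + min (wG k j) (wH k j)) :
    ∀ i j, gDist wG (f i) j ≤ t →
      gDist wG (f i) j ≤ A β' i j ∧
        A β' i j ≤ (1 + ε) * (1 + 1 / R) ^ (β' - 1) * gDist wG (f i) j :=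
  stmt_13_general wG wH hGdiag ε t β' hβ' hhopset f R A hA1 hAstep
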